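/- arXiv:2505.06209 — 2 statements merged into one kernel-verified Lean document; each statement's English description precedes it below -/
import Mathlib

section
/- For an Ising model on a finite graph with possibly signed couplings J_e and possibly signed external fields h_x, and any two vertices i, j: |Cov_{J,h}(σ_i, σ_j)| ≤ Cov_{|J|,|h|}(σ_i, σ_j) · ( Z_{|J|,|h|} / Z_{J,h} )², where the subscripts indicate the model with the absolute values of all interactions, and Z denotes the corresponding partition functions. -/
open Finset

/-- The spin value of a Boolean: `true ↦ +1`, `false ↦ -1`. -/
noncomputable def sp (b : Bool) : ℝ := if b then 1 else -1

variable {V : Type*} [Fintype V] [DecidableEq V]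

/-- Partition function of the Ising model on a finite graph with edge set `E`,
couplings `J` and external fields `h`. -/
noncomputable def gpart (E : Finset (V × V)) (J : V × V → ℝ) (h : V → ℝ) : ℝ :=
  ∑ σ : V → Bool,
    Real.exp ((∑ e ∈ E, J e * sp (σ e.1) * sp (σ e.2)) + ∑ x : V, h x * sp (σ x))

/-- Gibbs expectation of an observable for the Ising model on a finite graph. -/
noncomputable def gexp (E : Finset (V × V)) (J : V × V → ℝ) (h : V → ℝ)
    (f : (V → Bool) → ℝ) : ℝ :=
  (∑ σ : V → Bool,
      Real.exp ((∑ e ∈ E, J e * sp (σ e.1) * sp (σ e.2)) + ∑ x : V, h x * sp (σ x)) * f σ) /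
    gpart E J h

/-- Covariance of the spins at `i` and `j` under the Gibbs measure. -/
noncomputable def gcov (E : Finset (V × V)) (J : V × V → ℝ) (h : V → ℝ) (i j : V) : ℝ :=
  gexp E J h (fun σ => sp (σ i) * sp (σ j)) -
    gexp E J h (fun σ => sp (σ i)) * gexp E J h (fun σ => sp (σ j))

/-! Pairing `σ` with an independent replica `τ = σ·η` gives
`2 Z² Cov(σ_i, σ_j) = Σ_η (1 - η_i)(1 - η_j) Σ_σ exp(H_η(σ)) σ_i σ_j`, where `H_η` is the
log-weight with couplings `J_e (1 + η_x η_y)` and fields `h_x (1 + η_x)`: the `η`-weights are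
nonnegative and the new couplings keep the signs of `J` and `h`. Expanding
`exp (c χ) = cosh c + sinh c χ` for every bond and field writes the inner sum as a combination
of sums `Σ_σ ∏_{x ∈ B} σ_x ≥ 0` with coefficients products of `cosh c` and `sinh c`, so it is
dominated in absolute value by the same sum for `|J|, |h|`. -/

open symmDiff Real

lemma sp_mul_self (b : Bool) : sp b * sp b = 1 := by cases b <;> norm_num [sp]

lemma sp_beq (a b : Bool) : sp (a == b) = sp a * sp b := by
  cases a <;> cases b <;> norm_num [sp]

section SpinProd

variable {α : Type*}

noncomputable def spinProd (A : Finset α) (σ : α → Bool) : ℝ := ∏ x ∈ A, sp (σ x)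

lemma spinProd_singleton (x : α) (σ : α → Bool) : spinProd {x} σ = sp (σ x) :=
  prod_singleton _ _

lemma spinProd_mul_self (A : Finset α) (σ : α → Bool) : spinProd A σ * spinProd A σ = 1 := by
  rw [spinProd, ← prod_mul_distrib]
  exact prod_eq_one fun x _ => sp_mul_self _

lemma spinProd_mul_spinProd [DecidableEq α] (A B : Finset α) (σ : α → Bool) :
    spinProd A σ * spinProd B σ = spinProd (A ∆ B) σ := by
  have hunion : spinProd (A ∪ B) σ = spinProd (A ∆ B) σ * spinProd (A ∩ B) σ := by
    rw [symmDiff_eq_sup_sdiff_inf]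
    exact (prod_sdiff inter_subset_union).symm
  calc spinProd A σ * spinProd B σ = spinProd (A ∪ B) σ * spinProd (A ∩ B) σ :=
        prod_union_inter.symm
    _ = spinProd (A ∆ B) σ := by rw [hunion, mul_assoc, spinProd_mul_self, mul_one]

lemma spinProd_eq_one_or_eq_neg_one (A : Finset α) (σ : α → Bool) :
    spinProd A σ = 1 ∨ spinProd A σ = -1 := by
  refine prod_induction _ (fun r => r = 1 ∨ r = -1) ?_ (Or.inl rfl) fun x _ => ?_
  · rintro a b (rfl | rfl) (rfl | rfl) <;> norm_num
  · cases σ x <;> simp [sp]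

lemma sum_spinProd_nonneg [Fintype α] [DecidableEq α] (A : Finset α) :
    0 ≤ ∑ σ : α → Bool, spinProd A σ := by
  have hfactor : ∑ σ : α → Bool, spinProd A σ = ∏ x, ∑ b, if x ∈ A then sp b else 1 := by
    rw [Fintype.prod_sum]
    exact sum_congr rfl fun σ _ => (Fintype.prod_ite_mem A _).symm
  rw [hfactor]
  refine prod_nonneg fun x _ => ?_
  split_ifs <;> norm_num [sp]

lemma exp_mul_spinProd (c : ℝ) (A : Finset α) (σ : α → Bool) :
    exp (c * spinProd A σ) = cosh c + sinh c * spinProd A σ := by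
  rcases spinProd_eq_one_or_eq_neg_one A σ with h | h <;> rw [h]
  · rw [mul_one, mul_one, cosh_add_sinh]
  · rw [mul_neg_one, mul_neg_one, ← cosh_sub_sinh, sub_eq_add_neg]

lemma sum_exp_cons_mul_spinProd [Fintype α] [DecidableEq α] {ι : Type*} (s : Finset ι) (a : ι)
    (ha : a ∉ s) (m : ι → Finset α) (c : ι → ℝ) (A : Finset α) :
    ∑ σ : α → Bool, exp (∑ t ∈ cons a s ha, c t * spinProd (m t) σ) * spinProd A σ =
      cosh (c a) * ∑ σ : α → Bool, exp (∑ t ∈ s, c t * spinProd (m t) σ) * spinProd A σ +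
        sinh (c a) * ∑ σ : α → Bool,
          exp (∑ t ∈ s, c t * spinProd (m t) σ) * spinProd (m a ∆ A) σ := by
  rw [mul_sum, mul_sum, ← sum_add_distrib]
  refine sum_congr rfl fun σ _ => ?_
  rw [sum_cons, exp_add, exp_mul_spinProd, ← spinProd_mul_spinProd]
  ring

lemma abs_sum_exp_mul_spinProd_le [Fintype α] [DecidableEq α] {ι : Type*} (s : Finset ι)
    (m : ι → Finset α) (c : ι → ℝ) (A : Finset α) :
    |∑ σ : α → Bool, exp (∑ t ∈ s, c t * spinProd (m t) σ) * spinProd A σ| ≤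
      ∑ σ : α → Bool, exp (∑ t ∈ s, |c t| * spinProd (m t) σ) * spinProd A σ := by
  induction s using Finset.cons_induction generalizing A with
  | empty =>
    simp only [sum_empty, exp_zero, one_mul]
    exact (abs_of_nonneg (sum_spinProd_nonneg A)).le
  | cons a s ha ih =>
    rw [sum_exp_cons_mul_spinProd, sum_exp_cons_mul_spinProd]
    refine (abs_add_le _ _).trans ?_
    rw [abs_mul, abs_mul, abs_of_pos (cosh_pos _), ← cosh_abs, abs_sinh]
    have hsinh : 0 ≤ sinh |c a| := sinh_nonneg_iff.mpr (abs_nonneg _)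
    gcongr
    exacts [ih A, ih (m a ∆ A)]

end SpinProd

noncomputable def logWeight (E : Finset (V × V)) (J : V × V → ℝ) (h : V → ℝ) (σ : V → Bool) :
    ℝ :=
  (∑ e ∈ E, J e * sp (σ e.1) * sp (σ e.2)) + ∑ x : V, h x * sp (σ x)

lemma gpart_eq_sum_exp_logWeight (E : Finset (V × V)) (J : V × V → ℝ) (h : V → ℝ) :
    gpart E J h = ∑ σ : V → Bool, exp (logWeight E J h σ) := rfl

lemma gexp_eq_sum_exp_logWeight (E : Finset (V × V)) (J : V × V → ℝ) (h : V → ℝ)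
    (f : (V → Bool) → ℝ) :
    gexp E J h f = (∑ σ : V → Bool, exp (logWeight E J h σ) * f σ) / gpart E J h := rfl

lemma gpart_pos (E : Finset (V × V)) (J : V × V → ℝ) (h : V → ℝ) : 0 < gpart E J h :=
  sum_pos (fun _ _ => exp_pos _) univ_nonempty

lemma logWeight_eq_sum_spinProd (E : Finset (V × V)) (J : V × V → ℝ) (h : V → ℝ)
    (σ : V → Bool) :
    logWeight E J h σ = ∑ t ∈ E.disjSum univ, Sum.elim J h t *
      spinProd (Sum.elim (fun e => {e.1} ∆ {e.2}) (fun x => {x}) t) σ := by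
  simp only [logWeight, sum_disjSum, Sum.elim_inl, Sum.elim_inr, ← spinProd_mul_spinProd,
    spinProd_singleton, mul_assoc]

lemma abs_sum_exp_logWeight_mul_spinProd_le (E : Finset (V × V)) (J : V × V → ℝ) (h : V → ℝ)
    (A : Finset V) :
    |∑ σ : V → Bool, exp (logWeight E J h σ) * spinProd A σ| ≤
      ∑ σ : V → Bool, exp (logWeight E (fun e => |J e|) (fun x => |h x|) σ) * spinProd A σ := by
  have habs : Sum.elim (fun e => |J e|) (fun x => |h x|) = fun t => |Sum.elim J h t| := by
    ext (e | x) <;> rfl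
  simp only [logWeight_eq_sum_spinProd, habs]
  exact abs_sum_exp_mul_spinProd_le _ _ _ A

omit [DecidableEq V] in
lemma logWeight_add_logWeight_beq (E : Finset (V × V)) (J : V × V → ℝ) (h : V → ℝ)
    (σ η : V → Bool) :
    logWeight E J h σ + logWeight E J h (fun x => σ x == η x) =
      logWeight E (fun e => J e * (1 + sp (η e.1) * sp (η e.2)))
        (fun x => h x * (1 + sp (η x))) σ := by
  simp only [logWeight, sp_beq]
  rw [add_add_add_comm, ← sum_add_distrib, ← sum_add_distrib]
  congr 1 <;> exact sum_congr rfl fun _ _ => by ring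

lemma sum_sum_mul_mul_sub_mul_sub {α : Type*} (s : Finset α) (w f g : α → ℝ) :
    ∑ x ∈ s, ∑ y ∈ s, w x * w y * ((f x - f y) * (g x - g y)) =
      2 * ((∑ x ∈ s, w x) * ∑ x ∈ s, w x * (f x * g x) -
        (∑ x ∈ s, w x * f x) * ∑ x ∈ s, w x * g x) := by
  have hexpand (x y : α) : w x * w y * ((f x - f y) * (g x - g y)) =
      w x * (f x * g x) * w y + w x * (w y * (f y * g y)) - w x * f x * (w y * g y)
        - w x * g x * (w y * f y) := by ring
  simp only [hexpand, sum_sub_distrib, sum_add_distrib, ← sum_mul, ← mul_sum]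
  ring

noncomputable def replicaCov (E : Finset (V × V)) (J : V × V → ℝ) (h : V → ℝ) (i j : V) : ℝ :=
  ∑ σ : V → Bool, ∑ τ : V → Bool, exp (logWeight E J h σ + logWeight E J h τ) *
    ((sp (σ i) - sp (τ i)) * (sp (σ j) - sp (τ j)))

lemma gcov_eq_replicaCov_div (E : Finset (V × V)) (J : V × V → ℝ) (h : V → ℝ) (i j : V) :
    gcov E J h i j = replicaCov E J h i j / (2 * gpart E J h ^ 2) := by
  have hZ := (gpart_pos E J h).ne'
  simp only [gcov, gexp_eq_sum_exp_logWeight, replicaCov, exp_add, sum_sum_mul_mul_sub_mul_sub,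
    ← gpart_eq_sum_exp_logWeight]
  field_simp

lemma replicaCov_eq_sum_twist (E : Finset (V × V)) (J : V × V → ℝ) (h : V → ℝ) (i j : V) :
    replicaCov E J h i j = ∑ η : V → Bool, (1 - sp (η i)) * (1 - sp (η j)) *
      ∑ σ : V → Bool, exp (logWeight E (fun e => J e * (1 + sp (η e.1) * sp (η e.2)))
        (fun x => h x * (1 + sp (η x))) σ) * spinProd ({i} ∆ {j}) σ := by
  have hbij (σ : V → Bool) : Function.Bijective fun (η : V → Bool) x => σ x == η x := by
    refine Function.Involutive.bijective fun η => funext fun x => ?_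
    show (σ x == (σ x == η x)) = η x
    cases σ x <;> cases η x <;> rfl
  calc replicaCov E J h i j
      = ∑ σ : V → Bool, ∑ η : V → Bool,
          exp (logWeight E J h σ + logWeight E J h (fun x => σ x == η x)) *
            ((sp (σ i) - sp (σ i == η i)) * (sp (σ j) - sp (σ j == η j))) :=
        sum_congr rfl fun σ _ => (Fintype.sum_bijective _ (hbij σ) _ _ fun _ => rfl).symm
    _ = ∑ σ : V → Bool, ∑ η : V → Bool, (1 - sp (η i)) * (1 - sp (η j)) *
          (exp (logWeight E (fun e => J e * (1 + sp (η e.1) * sp (η e.2)))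
            (fun x => h x * (1 + sp (η x))) σ) * spinProd ({i} ∆ {j}) σ) := by
        refine sum_congr rfl fun σ _ => sum_congr rfl fun η _ => ?_
        rw [logWeight_add_logWeight_beq, ← spinProd_mul_spinProd, spinProd_singleton,
          spinProd_singleton, sp_beq, sp_beq]
        ring
    _ = _ := by
        rw [sum_comm]
        simp only [mul_sum]

lemma abs_replicaCov_le (E : Finset (V × V)) (J : V × V → ℝ) (h : V → ℝ) (i j : V) :
    |replicaCov E J h i j| ≤ replicaCov E (fun e => |J e|) (fun x => |h x|) i j := by
  rw [replicaCov_eq_sum_twist, replicaCov_eq_sum_twist]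
  refine (abs_sum_le_sum_abs _ _).trans (sum_le_sum fun η _ => ?_)
  have hweight : 0 ≤ (1 - sp (η i)) * (1 - sp (η j)) := by
    cases η i <;> cases η j <;> norm_num [sp]
  have hJ : (fun e => |J e| * (1 + sp (η e.1) * sp (η e.2))) =
      fun e => |J e * (1 + sp (η e.1) * sp (η e.2))| := by
    ext e
    have hnonneg : 0 ≤ 1 + sp (η e.1) * sp (η e.2) := by
      cases η e.1 <;> cases η e.2 <;> norm_num [sp]
    rw [abs_mul, abs_of_nonneg hnonneg]
  have hh : (fun x => |h x| * (1 + sp (η x))) = fun x => |h x * (1 + sp (η x))| := by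
    ext x
    have hnonneg : 0 ≤ 1 + sp (η x) := by cases η x <;> norm_num [sp]
    rw [abs_mul, abs_of_nonneg hnonneg]
  rw [abs_mul, abs_of_nonneg hweight, hJ, hh]
  exact mul_le_mul_of_nonneg_left (abs_sum_exp_logWeight_mul_spinProd_le _ _ _ _) hweight

theorem cov_signed_le_cov_absolute (E : Finset (V × V)) (J : V × V → ℝ) (h : V → ℝ)
    (i j : V) :
    |gcov E J h i j| ≤
      gcov E (fun e => |J e|) (fun x => |h x|) i j *
        (gpart E (fun e => |J e|) (fun x => |h x|) / gpart E J h) ^ 2 := by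
  have hZ := gpart_pos E J h
  have hZabs := gpart_pos E (fun e => |J e|) (fun x => |h x|)
  rw [gcov_eq_replicaCov_div, gcov_eq_replicaCov_div]
  calc |replicaCov E J h i j / (2 * gpart E J h ^ 2)|
      = |replicaCov E J h i j| / (2 * gpart E J h ^ 2) := by
        rw [abs_div, abs_of_pos (mul_pos two_pos (pow_pos hZ 2))]
    _ ≤ replicaCov E (fun e => |J e|) (fun x => |h x|) i j / (2 * gpart E J h ^ 2) := by
        gcongr
        exact abs_replicaCov_le E J h i j
    _ = _ := by
        field_simp
end

section
/- For the one-dimensional ferromagnetic Ising model on {0,…,N} with couplings J_x > 0 and fields h_x ≥ 0, the endpoint covariance admits the exact random-current representation Cov(σ_0, σ_N) = ∏_{x=0}^{N-1} tanh(J_x) · [ P(n^Λ even on all edges)·P(n^g ≡ 0) / P(∂n^Λ = ∂n^g) ]², where n^Λ and n^g are independent Poisson arrival processes with rates J_x on lattice edges and h_x on ghost edges respectively. -/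
open Finset

/-- Hamiltonian of the 1D Ising chain on `{0, …, N}` with couplings `J` and fields `h`. -/
noncomputable def ham (N : ℕ) (J : Fin N → ℝ) (h : Fin (N + 1) → ℝ)
    (σ : Fin (N + 1) → Bool) : ℝ :=
  -(∑ x : Fin N, J x * sp (σ x.castSucc) * sp (σ x.succ)) - ∑ x : Fin (N + 1), h x * sp (σ x)

/-- Partition function of the 1D Ising chain. -/
noncomputable def part (N : ℕ) (J : Fin N → ℝ) (h : Fin (N + 1) → ℝ) : ℝ :=
  ∑ σ : Fin (N + 1) → Bool, Real.exp (-(ham N J h σ))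

/-- Gibbs probability of a configuration. -/
noncomputable def gibbs (N : ℕ) (J : Fin N → ℝ) (h : Fin (N + 1) → ℝ)
    (σ : Fin (N + 1) → Bool) : ℝ :=
  Real.exp (-(ham N J h σ)) / part N J h

/-- Gibbs expectation of an observable. -/
noncomputable def gibbsE (N : ℕ) (J : Fin N → ℝ) (h : Fin (N + 1) → ℝ)
    (f : (Fin (N + 1) → Bool) → ℝ) : ℝ :=
  ∑ σ : Fin (N + 1) → Bool, gibbs N J h σ * f σ

/-- Covariance of the endpoint spins `σ_0` and `σ_N` under the Gibbs measure. -/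
noncomputable def covEnds (N : ℕ) (J : Fin N → ℝ) (h : Fin (N + 1) → ℝ) : ℝ :=
  gibbsE N J h (fun σ => sp (σ 0) * sp (σ (Fin.last N))) -
    gibbsE N J h (fun σ => sp (σ 0)) * gibbsE N J h (fun σ => sp (σ (Fin.last N)))

/-- Total number of arrivals of the lattice current `nL` at the vertex `v` of `{0, …, N}`
(edge `x` joins vertices `x` and `x+1`). -/
def touch (N : ℕ) (nL : Fin N → ℕ) (v : Fin (N + 1)) : ℕ :=
  ∑ x : Fin N, if v = x.castSucc ∨ v = x.succ then nL x else 0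

/-- The sum of the ghost current over the vertices to the left of the edge `x`
(i.e. over vertices `y ≤ x`). -/
def lsum (N : ℕ) (ng : Fin (N + 1) → ℕ) (x : Fin N) : ℕ :=
  ∑ y : Fin (N + 1), if (y : ℕ) ≤ (x : ℕ) then ng y else 0

/-- The sum of the ghost current over the vertices to the right of the edge `x`
(i.e. over vertices `y ≥ x + 1`). -/
def rsum (N : ℕ) (ng : Fin (N + 1) → ℕ) (x : Fin N) : ℕ :=
  ∑ y : Fin (N + 1), if (x : ℕ) + 1 ≤ (y : ℕ) then ng y else 0

/-- The Poisson probability mass function with rate `r`. -/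
noncomputable def poisPMF (r : ℝ) (k : ℕ) : ℝ := Real.exp (-r) * r ^ k / (Nat.factorial k)

/-!
Both sides are evaluated in closed form. On the Ising side, the matrix `M` of partition functions
with prescribed endpoint spins factors into one `2 × 2` transfer matrix per edge, so
`det M = ∏ₓ 2 sinh 2Jₓ`, and expanding the three Gibbs expectations over the four endpoint
configurations gives `Cov(σ₀, σ_N) = 4 det M / Z²`.

On the current side, `P(n^Λ even) = ∏ₓ e^{-Jₓ} cosh Jₓ` and `P(n^g = 0) = ∏ᵥ e^{-hᵥ}`. The constraint
`∂n^Λ = ∂n^g` says that every vertex has even total degree, which is detected by averaging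
`∏ᵥ σᵥ^(degree of v)` over all spin configurations `σ`. Exchanging this average with the Poisson
sums and using `E[sⁿ] = e^{r(s-1)}` on every edge and ghost edge turns `P(∂n^Λ = ∂n^g)` into
`2^{-(N+1)} ∏ₓ e^{-Jₓ} ∏ᵥ e^{-hᵥ} Z`. The identity then reduces to `tanh J (2 cosh J)² = 2 sinh 2J`.
-/

open Real

theorem summable_norm_prod_pi {α : Type*} :
    ∀ {n : ℕ} (f : Fin n → α → ℝ), (∀ i, Summable fun a => ‖f i a‖) →
      Summable fun g : Fin n → α => ‖∏ i, f i (g i)‖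
  | 0, _, _ => .of_finite
  | n + 1, f, hf => by
    have htail := summable_norm_prod_pi (fun i => f i.succ) (fun i => hf i.succ)
    have hprod := summable_mul_of_summable_norm (f := fun a => ‖f 0 a‖)
      (g := fun g : Fin n → α => ‖∏ i, f i.succ (g i)‖) (by simpa using hf 0) (by simpa using htail)
    rw [← (Fin.consEquiv fun _ => α).summable_iff]
    refine hprod.congr fun q => ?_
    simp [Fin.prod_univ_succ, norm_mul]

theorem hasSum_prod_pi {α : Type*} :
    ∀ {n : ℕ} (f : Fin n → α → ℝ), (∀ i, Summable fun a => ‖f i a‖) →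
      HasSum (fun g : Fin n → α => ∏ i, f i (g i)) (∏ i, ∑' a, f i a)
  | 0, _, _ => by simp
  | n + 1, f, hf => by
    have htail := hasSum_prod_pi (fun i => f i.succ) (fun i => hf i.succ)
    have hprod := summable_mul_of_summable_norm (hf 0)
      (summable_norm_prod_pi (fun i => f i.succ) fun i => hf i.succ)
    have hcons : (fun g : Fin (n + 1) → α => ∏ i, f i (g i)) ∘ Fin.consEquiv (fun _ => α) =
        fun q => f 0 q.1 * ∏ i, f i.succ (q.2 i) := by
      funext q
      simp [Fin.prod_univ_succ]
    rw [Fin.prod_univ_succ, ← (Fin.consEquiv fun _ => α).hasSum_iff, hcons]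
    exact ((hf 0).of_norm.hasSum.mul htail hprod :)

theorem Fintype.sum_pi_fin_succ {β M : Type*} [Fintype β] [AddCommMonoid M] {n : ℕ}
    (F : (Fin (n + 1) → β) → M) : ∑ σ, F σ = ∑ c, ∑ τ : Fin n → β, F (Fin.cons c τ) := by
  rw [← Fintype.sum_prod_type', ← (Fin.consEquiv fun _ => β).sum_comp]
  rfl

theorem Matrix.det_bool {R : Type*} [CommRing R] (A : Matrix Bool Bool R) :
    A.det = A true true * A false false - A true false * A false true := by
  rw [← Matrix.det_reindex_self finTwoEquiv.symm, Matrix.det_fin_two]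
  simp [finTwoEquiv]
  ring

theorem hasSum_poisPMF_mul_pow (r s : ℝ) :
    HasSum (fun k => poisPMF r k * s ^ k) (exp (r * (s - 1))) := by
  have h := (NormedSpace.expSeries_div_hasSum_exp (r * s)).mul_left (exp (-r))
  rw [← exp_eq_exp_ℝ, ← exp_add, neg_add_eq_sub, ← mul_sub_one] at h
  exact h.congr_fun fun k => by rw [poisPMF, mul_pow]; ring

theorem summable_norm_poisPMF_mul_pow (r s : ℝ) :
    Summable fun k => ‖poisPMF r k * s ^ k‖ := by
  refine ((summable_pow_div_factorial |r * s|).mul_left (exp (-r))).congr fun k => ?_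
  rw [poisPMF, norm_mul, norm_div, norm_mul, norm_pow, norm_pow, Real.norm_of_nonneg (exp_pos _).le,
    Real.norm_natCast, Real.norm_eq_abs, Real.norm_eq_abs, abs_mul, mul_pow]
  ring

theorem hasSum_ite_even_poisPMF (r : ℝ) :
    HasSum (fun k => if Even k then poisPMF r k else 0) (exp (-r) * cosh r) := by
  have h := ((hasSum_poisPMF_mul_pow r 1).add (hasSum_poisPMF_mul_pow r (-1))).div_const 2
  have hval : (exp (r * (1 - 1)) + exp (r * (-1 - 1))) / 2 = exp (-r) * cosh r := by
    rw [cosh_eq, mul_div_assoc', mul_add, ← exp_add, ← exp_add]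
    ring_nf
  rw [hval] at h
  refine h.congr_fun fun k => ?_
  rcases Nat.even_or_odd k with hk | hk
  · simp [hk, hk.neg_one_pow]
  · simp [Nat.not_even_iff_odd.2 hk, hk.neg_one_pow]

theorem hasSum_prod_poisPMF_mul_pow {n : ℕ} (r s : Fin n → ℝ) :
    HasSum (fun g : Fin n → ℕ => ∏ i, poisPMF (r i) (g i) * s i ^ g i)
      (∏ i, exp (r i * (s i - 1))) := by
  have h := hasSum_prod_pi (fun i k => poisPMF (r i) k * s i ^ k)
    fun i => summable_norm_poisPMF_mul_pow (r i) (s i)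
  rwa [Finset.prod_congr rfl fun i _ => (hasSum_poisPMF_mul_pow (r i) (s i)).tsum_eq] at h

theorem summable_norm_prod_poisPMF_mul_pow {n : ℕ} (r s : Fin n → ℝ) :
    Summable fun g : Fin n → ℕ => ‖∏ i, poisPMF (r i) (g i) * s i ^ g i‖ :=
  summable_norm_prod_pi (fun i k => poisPMF (r i) k * s i ^ k)
    fun i => summable_norm_poisPMF_mul_pow (r i) (s i)

theorem hasSum_ite_forall_even_prod_poisPMF {n : ℕ} (r : Fin n → ℝ) :
    HasSum (fun g : Fin n → ℕ => if ∀ i, Even (g i) then ∏ i, poisPMF (r i) (g i) else 0)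
      (∏ i, exp (-r i) * cosh (r i)) := by
  have hsumm (i : Fin n) : Summable fun k => ‖if Even k then poisPMF (r i) k else 0‖ := by
    refine .of_nonneg_of_le (fun _ => norm_nonneg _) (fun k => ?_)
      (by simpa using summable_norm_poisPMF_mul_pow (r i) 1)
    split_ifs <;> simp
  have h := hasSum_prod_pi (fun i k => if Even k then poisPMF (r i) k else 0) hsumm
  rw [Finset.prod_congr rfl fun i _ => (hasSum_ite_even_poisPMF (r i)).tsum_eq] at h
  exact h.congr_fun fun g => by simp [Finset.prod_ite_zero]

theorem sum_sp_pow (m : ℕ) : ∑ b : Bool, sp b ^ m = if Even m then 2 else 0 := by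
  rcases Nat.even_or_odd m with hm | hm
  · simp [sp, hm, hm.neg_one_pow, one_add_one_eq_two]
  · simp [sp, Nat.not_even_iff_odd.2 hm, hm.neg_one_pow]

theorem sum_prod_sp_pow {ι : Type*} [Fintype ι] [DecidableEq ι] (m : ι → ℕ) :
    ∑ η : ι → Bool, ∏ x, sp (η x) ^ m x = if ∀ x, Even (m x) then 2 ^ Fintype.card ι else 0 := by
  simp only [← Fintype.prod_sum fun x b => sp b ^ m x, sum_sp_pow, Finset.prod_ite_zero,
    Finset.mem_univ, true_imp_iff, Finset.prod_const, Finset.card_univ]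

section Chain

variable {N : ℕ}

theorem prod_sp_pow_touch (n : Fin N → ℕ) (σ : Fin (N + 1) → Bool) :
    ∏ v, sp (σ v) ^ touch N n v = ∏ x, (sp (σ x.castSucc) * sp (σ x.succ)) ^ n x := by
  simp only [touch, ← Finset.prod_pow_eq_pow_sum]
  rw [Finset.prod_comm]
  refine Finset.prod_congr rfl fun x _ => ?_
  have hne : x.castSucc ≠ x.succ := Fin.castSucc_lt_succ.ne
  have hpair (v : Fin (N + 1)) :
      v = x.castSucc ∨ v = x.succ ↔ v ∈ ({x.castSucc, x.succ} : Finset (Fin (N + 1))) := by simp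
  simp only [pow_ite, pow_zero, hpair]
  rw [Fintype.prod_ite_mem, Finset.prod_pair hne, mul_pow]

theorem ite_parity_match_eq_sum (nL : Fin N → ℕ) (ng : Fin (N + 1) → ℕ) :
    (if ∀ v, (Odd (touch N nL v) ↔ Odd (ng v)) then (1 : ℝ) else 0) =
      (∑ σ : Fin (N + 1) → Bool, (∏ x, (sp (σ x.castSucc) * sp (σ x.succ)) ^ nL x) *
        ∏ v, sp (σ v) ^ ng v) / 2 ^ (N + 1) := by
  have hsum := sum_prod_sp_pow fun v => touch N nL v + ng v
  simp only [pow_add, Finset.prod_mul_distrib, prod_sp_pow_touch, Nat.even_add] at hsum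
  rw [hsum, Fintype.card_fin]
  simp only [← Nat.not_even_iff_odd, not_iff_not]
  split_ifs <;> simp

theorem prod_exp_sub_one_eq_exp_neg_ham (J : Fin N → ℝ) (h : Fin (N + 1) → ℝ)
    (σ : Fin (N + 1) → Bool) :
    (∏ x, exp (J x * (sp (σ x.castSucc) * sp (σ x.succ) - 1))) * ∏ v, exp (h v * (sp (σ v) - 1)) =
      (∏ x, exp (-J x)) * (∏ v, exp (-h v)) * exp (-ham N J h σ) := by
  simp only [← exp_sum, ← exp_add, ham]
  congr 1
  simp only [mul_sub, mul_one, Finset.sum_sub_distrib, Finset.sum_neg_distrib, mul_assoc]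
  ring

theorem hasSum_ite_parity_match (J : Fin N → ℝ) (h : Fin (N + 1) → ℝ) :
    HasSum (fun p : (Fin N → ℕ) × (Fin (N + 1) → ℕ) =>
        if ∀ v, (Odd (touch N p.1 v) ↔ Odd (p.2 v)) then
          (∏ x, poisPMF (J x) (p.1 x)) * ∏ v, poisPMF (h v) (p.2 v) else 0)
      ((∏ x, exp (-J x)) * (∏ v, exp (-h v)) * part N J h / 2 ^ (N + 1)) := by
  have hσ (σ : Fin (N + 1) → Bool) :
      HasSum (fun p : (Fin N → ℕ) × (Fin (N + 1) → ℕ) =>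
          (∏ x, poisPMF (J x) (p.1 x) * (sp (σ x.castSucc) * sp (σ x.succ)) ^ p.1 x) *
            ∏ v, poisPMF (h v) (p.2 v) * sp (σ v) ^ p.2 v)
        ((∏ x, exp (-J x)) * (∏ v, exp (-h v)) * exp (-ham N J h σ)) := by
    set s : Fin N → ℝ := fun x => sp (σ x.castSucc) * sp (σ x.succ)
    have hprod := summable_mul_of_summable_norm (summable_norm_prod_poisPMF_mul_pow J s)
      (summable_norm_prod_poisPMF_mul_pow h fun v => sp (σ v))
    have hmul := (hasSum_prod_poisPMF_mul_pow J s).mul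
      (hasSum_prod_poisPMF_mul_pow h fun v => sp (σ v)) hprod
    rwa [prod_exp_sub_one_eq_exp_neg_ham] at hmul
  have hsum := (hasSum_sum (s := Finset.univ) fun σ _ => hσ σ).div_const (2 ^ (N + 1))
  rw [← Finset.mul_sum, ← part] at hsum
  refine hsum.congr_fun fun p => ?_
  rw [← mul_boole, ite_parity_match_eq_sum, mul_div_assoc', Finset.mul_sum]
  congr 1
  refine Finset.sum_congr rfl fun σ _ => ?_
  simp only [Finset.prod_mul_distrib]
  ring

noncomputable def endpointMatrix (N : ℕ) (J : Fin N → ℝ) (h : Fin (N + 1) → ℝ) :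
    Matrix Bool Bool ℝ :=
  Matrix.of fun a b =>
    ∑ σ : Fin (N + 1) → Bool with σ 0 = a ∧ σ (Fin.last N) = b, exp (-ham N J h σ)

noncomputable def transferMatrix (J h : ℝ) : Matrix Bool Bool ℝ :=
  Matrix.of fun a b => exp (h * sp a + J * sp a * sp b)

theorem det_transferMatrix (J h : ℝ) : (transferMatrix J h).det = 2 * sinh (2 * J) := by
  simp only [Matrix.det_bool, transferMatrix, Matrix.of_apply, sp, ← exp_add, sinh_eq]
  norm_num
  ring_nf

theorem sum_exp_neg_ham_mul_ends (J : Fin N → ℝ) (h : Fin (N + 1) → ℝ) (f : Bool → Bool → ℝ) :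
    ∑ σ, exp (-ham N J h σ) * f (σ 0) (σ (Fin.last N)) =
      ∑ a, ∑ b, endpointMatrix N J h a b * f a b := by
  simp only [endpointMatrix, Matrix.of_apply, Finset.sum_filter, Finset.sum_mul, ite_mul, zero_mul]
  rw [Finset.sum_congr rfl fun a _ => Finset.sum_comm, Finset.sum_comm]
  refine Finset.sum_congr rfl fun σ _ => ?_
  simp [ite_and]

theorem ham_cons (J : Fin (N + 1) → ℝ) (h : Fin (N + 2) → ℝ) (c : Bool)
    (τ : Fin (N + 1) → Bool) :
    -ham (N + 1) J h (Fin.cons c τ) =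
      h 0 * sp c + J 0 * sp c * sp (τ 0) + -ham N (Fin.tail J) (Fin.tail h) τ := by
  simp only [ham, Fin.sum_univ_succ (n := N), Fin.sum_univ_succ (n := N + 1), Fin.cons_zero,
    Fin.cons_succ, Fin.castSucc_zero, ← Fin.succ_castSucc, Fin.tail]
  ring

theorem endpointMatrix_succ (J : Fin (N + 1) → ℝ) (h : Fin (N + 2) → ℝ) :
    endpointMatrix (N + 1) J h =
      transferMatrix (J 0) (h 0) * endpointMatrix N (Fin.tail J) (Fin.tail h) := by
  ext a b
  simp only [endpointMatrix, transferMatrix, Matrix.mul_apply, Matrix.of_apply, Finset.sum_filter,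
    Finset.mul_sum]
  rw [Fintype.sum_pi_fin_succ]
  conv_rhs => rw [Finset.sum_comm]
  simp only [Fin.cons_zero, ← Fin.succ_last, Fin.cons_succ, ham_cons, exp_add,
    ite_and, mul_ite, mul_zero, Finset.sum_ite_irrel, Finset.sum_const_zero, Finset.sum_ite_eq,
    Finset.sum_ite_eq', Finset.mem_univ, if_true]

theorem det_endpointMatrix_zero (J : Fin 0 → ℝ) (h : Fin 1 → ℝ) :
    (endpointMatrix 0 J h).det = 1 := by
  simp only [Matrix.det_bool, endpointMatrix, Matrix.of_apply, Finset.sum_filter,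
    Fintype.sum_pi_fin_succ]
  simp [ham, sp, ← exp_add]

theorem det_endpointMatrix :
    ∀ {N : ℕ} (J : Fin N → ℝ) (h : Fin (N + 1) → ℝ),
      (endpointMatrix N J h).det = ∏ x, 2 * sinh (2 * J x)
  | 0, J, h => det_endpointMatrix_zero J h
  | N + 1, J, h => by
    rw [endpointMatrix_succ, Matrix.det_mul, det_transferMatrix, det_endpointMatrix,
      Fin.prod_univ_succ]
    rfl

theorem part_pos (J : Fin N → ℝ) (h : Fin (N + 1) → ℝ) : 0 < part N J h :=
  Finset.sum_pos (fun _ _ => exp_pos _) Finset.univ_nonempty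

theorem part_eq_sum_endpointMatrix (J : Fin N → ℝ) (h : Fin (N + 1) → ℝ) :
    part N J h = ∑ a, ∑ b, endpointMatrix N J h a b := by
  simpa [part] using sum_exp_neg_ham_mul_ends J h fun _ _ => 1

theorem gibbsE_ends (J : Fin N → ℝ) (h : Fin (N + 1) → ℝ) (f : Bool → Bool → ℝ) :
    gibbsE N J h (fun σ => f (σ 0) (σ (Fin.last N))) =
      (∑ a, ∑ b, endpointMatrix N J h a b * f a b) / part N J h := by
  simp only [gibbsE, gibbs, div_mul_eq_mul_div, ← Finset.sum_div, sum_exp_neg_ham_mul_ends]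

theorem covEnds_eq_det (J : Fin N → ℝ) (h : Fin (N + 1) → ℝ) :
    covEnds N J h = 4 * (endpointMatrix N J h).det / part N J h ^ 2 := by
  have hZ := (part_pos J h).ne'
  rw [covEnds, gibbsE_ends J h fun a b => sp a * sp b, gibbsE_ends J h fun a _ => sp a,
    gibbsE_ends J h fun _ b => sp b]
  rw [part_eq_sum_endpointMatrix] at hZ ⊢
  simp only [Matrix.det_bool, Fintype.sum_bool, sp, if_true, Bool.false_eq_true, if_false] at hZ ⊢
  field_simp
  ring

end Chain

theorem two_mul_sinh_two_mul_eq_tanh_mul (x : ℝ) :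
    2 * sinh (2 * x) = tanh x * (2 * cosh x) ^ 2 := by
  rw [tanh_eq_sinh_div_cosh, sinh_two_mul]
  field_simp [(cosh_pos x).ne']

theorem random_current_covariance_identity_general (N : ℕ) (J : Fin N → ℝ)
    (h : Fin (N + 1) → ℝ) :
    covEnds N J h =
      (∏ x : Fin N, Real.tanh (J x)) *
        ((∑' nL : Fin N → ℕ,
              if (∀ x, Even (nL x)) then ∏ x : Fin N, poisPMF (J x) (nL x) else 0) *
            (∑' ng : Fin (N + 1) → ℕ,
              if ng = 0 then ∏ x : Fin (N + 1), poisPMF (h x) (ng x) else 0) /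
          (∑' p : (Fin N → ℕ) × (Fin (N + 1) → ℕ),
              if (∀ v : Fin (N + 1), (Odd (touch N p.1 v) ↔ Odd (p.2 v))) then
                (∏ x : Fin N, poisPMF (J x) (p.1 x)) *
                  ∏ x : Fin (N + 1), poisPMF (h x) (p.2 x)
              else 0)) ^ 2 := by
  have hghost : (∑' ng : Fin (N + 1) → ℕ, if ng = 0 then ∏ v, poisPMF (h v) (ng v) else 0) =
      ∏ v, exp (-h v) := by
    rw [tsum_eq_single 0 fun ng hng => if_neg hng]
    simp [poisPMF]
  rw [covEnds_eq_det, det_endpointMatrix, (hasSum_ite_forall_even_prod_poisPMF J).tsum_eq, hghost,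
    (hasSum_ite_parity_match J h).tsum_eq,
    Finset.prod_congr rfl fun x _ => two_mul_sinh_two_mul_eq_tanh_mul (J x)]
  have hZ := (part_pos J h).ne'
  have hexpJ : ∏ x, exp (-J x) ≠ 0 := Finset.prod_ne_zero_iff.2 fun x _ => (exp_pos _).ne'
  have hexph : ∏ v, exp (-h v) ≠ 0 := Finset.prod_ne_zero_iff.2 fun v _ => (exp_pos _).ne'
  simp only [Finset.prod_mul_distrib, Finset.prod_pow, Finset.prod_const, Finset.card_fin]
  field_simp
  ring

theorem random_current_covariance_identity (N : ℕ) (J : Fin N → ℝ)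
    (h : Fin (N + 1) → ℝ) (hJ : ∀ x, 0 < J x) (hh : ∀ x, 0 ≤ h x) :
    covEnds N J h =
      (∏ x : Fin N, Real.tanh (J x)) *
        ((∑' nL : Fin N → ℕ,
              if (∀ x, Even (nL x)) then ∏ x : Fin N, poisPMF (J x) (nL x) else 0) *
            (∑' ng : Fin (N + 1) → ℕ,
              if ng = 0 then ∏ x : Fin (N + 1), poisPMF (h x) (ng x) else 0) /
          (∑' p : (Fin N → ℕ) × (Fin (N + 1) → ℕ),
              if (∀ v : Fin (N + 1), (Odd (touch N p.1 v) ↔ Odd (p.2 v))) then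
                (∏ x : Fin N, poisPMF (J x) (p.1 x)) *
                  ∏ x : Fin (N + 1), poisPMF (h x) (p.2 x)
              else 0)) ^ 2 :=
  random_current_covariance_identity_general N J h
end
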